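/- arXiv:math/0404393 — 2 statements merged into one kernel-verified Lean document; each statement's English description precedes it below -/
import Mathlib

section
/- Let ω ∈ Φ be a long root (i.e. ⟨ω,ω⟩ = 2). Suppose d is a positive integer, d₁, …, dₙ are positive integers with d₁ + ⋯ + dₙ ≤ d, and α₁, …, αₙ ∈ Φ are roots such that d·ω = d₁·α₁ + ⋯ + dₙ·αₙ in E. Then αⱼ = ω for every j, and consequently d₁ + ⋯ + dₙ = d. -/
open scoped RealInnerProductSpace BigOperators

/-- A finite subset `Φ` of a real inner product space is a reduced crystallographic
root system, normalized so that every root has squared length `1` or `2`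
(no `G₂`-factors). -/
def RootSystemNoG2 {E : Type*} [NormedAddCommGroup E] [InnerProductSpace ℝ E]
    (Φ : Finset E) : Prop :=
  (∀ α ∈ Φ, α ≠ 0) ∧
  (∀ α ∈ Φ, ∀ β ∈ Φ, β - (2 * ⟪β, α⟫ / ⟪α, α⟫) • α ∈ Φ) ∧
  (∀ α ∈ Φ, ∀ β ∈ Φ, ∃ n : ℤ, 2 * ⟪β, α⟫ / ⟪α, α⟫ = (n : ℝ)) ∧
  (∀ α ∈ Φ, ∀ t : ℝ, t • α ∈ Φ → t = 1 ∨ t = -1) ∧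
  (∀ α ∈ Φ, ⟪α, α⟫ = 1 ∨ ⟪α, α⟫ = 2)

/-! Every root has squared length at most `⟪ω, ω⟫ = 2`, so expanding `‖αⱼ - ω‖² ≥ 0` gives
`⟪αⱼ, ω⟫ ≤ ⟪ω, ω⟫`, with equality only for `αⱼ = ω`. Pairing `d • ω = ∑ cⱼ • αⱼ` with `ω`
turns `∑ cⱼ (⟪ω, ω⟫ - ⟪αⱼ, ω⟫) = (∑ cⱼ - d) ⟪ω, ω⟫ ≤ 0` into a vanishing sum of
nonnegative terms, so each of them is zero. -/

section InnerProductSpace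

variable {F : Type*} [NormedAddCommGroup F] [InnerProductSpace ℝ F]

theorem real_inner_le_inner_self_of_inner_self_le {x y : F} (h : ⟪x, x⟫ ≤ ⟪y, y⟫) :
    ⟪x, y⟫ ≤ ⟪y, y⟫ := by
  have := real_inner_self_nonneg (x := x - y)
  rw [inner_sub_sub_self, real_inner_comm x y] at this
  linarith

theorem eq_of_real_inner_eq_inner_self {x y : F} (h : ⟪x, x⟫ ≤ ⟪y, y⟫)
    (hxy : ⟪x, y⟫ = ⟪y, y⟫) : x = y := by
  have hsq : ⟪x - y, x - y⟫ ≤ 0 := by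
    rw [inner_sub_sub_self, real_inner_comm x y]
    linarith
  exact sub_eq_zero.mp (inner_self_eq_zero.mp (le_antisymm hsq real_inner_self_nonneg))

theorem eq_of_smul_eq_sum_smul_of_inner_self_le {ι : Type*} [Fintype ι] {ω : F} {v : ι → F}
    (hv : ∀ i, ⟪v i, v i⟫ ≤ ⟪ω, ω⟫) {d : ℝ} {c : ι → ℝ} (hc : ∀ i, 0 < c i)
    (hsum : ∑ i, c i ≤ d) (heq : d • ω = ∑ i, c i • v i) (i : ι) : v i = ω := by
  have hdefect_nonneg : ∀ j ∈ Finset.univ, 0 ≤ c j * (⟪ω, ω⟫ - ⟪v j, ω⟫) := fun j _ =>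
    mul_nonneg (hc j).le (sub_nonneg.mpr (real_inner_le_inner_self_of_inner_self_le (hv j)))
  have hpair : d * ⟪ω, ω⟫ = ∑ j, c j * ⟪v j, ω⟫ := by
    simpa only [real_inner_smul_left, sum_inner] using congrArg (⟪·, ω⟫) heq
  have hdefect_sum : ∑ j, c j * (⟪ω, ω⟫ - ⟪v j, ω⟫) = (∑ j, c j - d) * ⟪ω, ω⟫ := by
    simp only [mul_sub, Finset.sum_sub_distrib, ← Finset.sum_mul, ← hpair, sub_mul]
  have hdefect_zero : ∑ j, c j * (⟪ω, ω⟫ - ⟪v j, ω⟫) = 0 := by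
    refine le_antisymm ?_ (Finset.sum_nonneg hdefect_nonneg)
    rw [hdefect_sum]
    exact mul_nonpos_of_nonpos_of_nonneg (sub_nonpos.mpr hsum) real_inner_self_nonneg
  have hi := (Finset.sum_eq_zero_iff_of_nonneg hdefect_nonneg).mp hdefect_zero i
    (Finset.mem_univ i)
  rw [mul_eq_zero, sub_eq_zero] at hi
  exact eq_of_real_inner_eq_inner_self (hv i) (hi.resolve_left (hc i).ne').symm

end InnerProductSpace

theorem RootSystemNoG2.inner_self_le_two {E : Type*} [NormedAddCommGroup E]
    [InnerProductSpace ℝ E] {Φ : Finset E} (hΦ : RootSystemNoG2 Φ) {α : E} (hα : α ∈ Φ) :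
    ⟪α, α⟫ ≤ 2 := by
  rcases hΦ.2.2.2.2 α hα with h | h <;> linarith

theorem long_weight_combination_general {E : Type*} [NormedAddCommGroup E] [InnerProductSpace ℝ E]
    (Φ : Finset E) (hΦ : RootSystemNoG2 Φ)
    (ω : E) (hlong : ⟪ω, ω⟫ = 2)
    (n : ℕ) (α : Fin n → E) (hα : ∀ j, α j ∈ Φ)
    (d : ℕ)
    (c : Fin n → ℕ) (hc : ∀ j, 0 < c j)
    (hsum : ∑ j, c j ≤ d)
    (heq : (d : ℝ) • ω = ∑ j, (c j : ℝ) • α j) :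
    (∀ j, α j = ω) ∧ ∑ j, c j = d := by
  have hall : ∀ j, α j = ω :=
    eq_of_smul_eq_sum_smul_of_inner_self_le (fun j => hlong ▸ hΦ.inner_self_le_two (hα j))
      (fun j => Nat.cast_pos.mpr (hc j)) (by exact_mod_cast hsum) heq
  have hω : ω ≠ 0 := by
    rintro rfl
    simp at hlong
  refine ⟨hall, ?_⟩
  rw [Finset.sum_congr rfl fun j _ => by rw [hall j], ← Finset.sum_smul] at heq
  exact_mod_cast (smul_left_injective ℝ hω heq).symm

/-- If a long root `ω` is written as `d • ω = ∑ dⱼ • αⱼ` with positive integers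
`d, dⱼ`, `∑ dⱼ ≤ d` and roots `αⱼ`, then every `αⱼ = ω` and `∑ dⱼ = d`. -/
theorem long_weight_combination {E : Type*} [NormedAddCommGroup E] [InnerProductSpace ℝ E]
    (Φ : Finset E) (hΦ : RootSystemNoG2 Φ)
    (ω : E) (hω : ω ∈ Φ) (hlong : ⟪ω, ω⟫ = 2)
    (n : ℕ) (α : Fin n → E) (hα : ∀ j, α j ∈ Φ)
    (d : ℕ) (hd : 0 < d)
    (c : Fin n → ℕ) (hc : ∀ j, 0 < c j)
    (hsum : ∑ j, c j ≤ d)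
    (heq : (d : ℝ) • ω = ∑ j, (c j : ℝ) • α j) :
    (∀ j, α j = ω) ∧ ∑ j, c j = d :=
  long_weight_combination_general Φ hΦ ω hlong n α hα d c hc hsum heq
end

section
/- Let ω ∈ Φ be a short root (i.e. ⟨ω,ω⟩ = 1). Suppose d is a positive integer, d₁, …, dₙ are positive integers with d₁ + ⋯ + dₙ ≤ d, and α₁, …, αₙ ∈ Φ are roots such that d·ω = d₁·α₁ + ⋯ + dₙ·αₙ in E. Then either αⱼ = ω for some j, or there exist two indices j₀ ≠ j₁ such that α_{j₀} and α_{j₁} are long roots, ⟨α_{j₀}, α_{j₁}⟩ = 0, and α_{j₀} + α_{j₁} = 2ω (so that ω = ½(α_{j₀} + α_{j₁}) is the average of two orthogonal long roots appearing in the relation). -/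
/-!
Pairing the relation with `ω` bounds every term: `2⟪α, ω⟫` is an integer of absolute value at
most `√8`, so `⟪α, ω⟫ ≤ 1` for each root `α`, and `∑ dⱼ ≤ d` then forces `∑ dⱼ = d` and
`⟪αⱼ, ω⟫ = 1` for all `j`. A short `αⱼ` is then `ω` itself. If all `αⱼ` are long, pairing the
relation with some `αᵢ` gives `∑ dⱼ ⟪αᵢ, αⱼ⟫ = ∑ dⱼ` while the `i`-th term is `2dᵢ`, so
`⟪αᵢ, αⱼ⟫ < 1` for some `j ≠ i`. As `‖αᵢ + αⱼ - 2ω‖² = 2⟪αᵢ, αⱼ⟫` and `⟪αᵢ, αⱼ⟫` is an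
integer, it vanishes, and then `αᵢ + αⱼ = 2ω`.
-/

open scoped RealInnerProductSpace BigOperators

open Finset

section InnerProduct

variable {E : Type*} [NormedAddCommGroup E] [InnerProductSpace ℝ E]

theorem eq_of_real_inner_eq_one {x y : E} (hx : ⟪x, x⟫ = 1) (hy : ⟪y, y⟫ = 1)
    (hxy : ⟪x, y⟫ = 1) : x = y := by
  rw [← sub_eq_zero, ← inner_self_eq_zero (𝕜 := ℝ), real_inner_sub_sub_self, hx, hy, hxy]
  norm_num

theorem real_inner_le_one_of_two_mul_inner_eq_intCast {x ω : E} (hω : ⟪ω, ω⟫ = 1)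
    (hx : ⟪x, x⟫ ≤ 2) {m : ℤ} (hm : 2 * ⟪x, ω⟫ = m) : ⟪x, ω⟫ ≤ 1 := by
  have hcs := real_inner_mul_inner_self_le x ω
  rw [hω, mul_one] at hcs
  have hm3 : (m : ℝ) < 3 := by nlinarith
  have hm2 : m ≤ 2 := Int.lt_add_one_iff.mp (by exact_mod_cast hm3)
  have : (m : ℝ) ≤ 2 := by exact_mod_cast hm2
  linarith

theorem real_inner_add_sub_two_smul_self {α β ω : E} (hα : ⟪α, α⟫ = 2) (hβ : ⟪β, β⟫ = 2)
    (hω : ⟪ω, ω⟫ = 1) (hαω : ⟪α, ω⟫ = 1) (hβω : ⟪β, ω⟫ = 1) :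
    ⟪α + β - (2 : ℝ) • ω, α + β - (2 : ℝ) • ω⟫ = 2 * ⟪α, β⟫ := by
  simp only [inner_sub_left, inner_sub_right, inner_add_left, inner_add_right,
    real_inner_smul_left, real_inner_smul_right, real_inner_comm α β, real_inner_comm α ω,
    real_inner_comm β ω, hα, hβ, hω, hαω, hβω]
  ring

variable {ι : Type*} [Fintype ι]

theorem sum_eq_and_real_inner_eq_one_of_smul_eq_sum {ω : E} (hω : ⟪ω, ω⟫ = 1) {α : ι → E}
    (hle : ∀ j, ⟪α j, ω⟫ ≤ 1) {c : ι → ℝ} (hc : ∀ j, 0 < c j) {d : ℝ}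
    (hsum : ∑ j, c j ≤ d) (heq : d • ω = ∑ j, c j • α j) :
    ∑ j, c j = d ∧ ∀ j, ⟪α j, ω⟫ = 1 := by
  have hpair : d = ∑ j, c j * ⟪α j, ω⟫ := by
    simpa only [sum_inner, real_inner_smul_left, hω, mul_one] using congrArg (⟪·, ω⟫) heq
  have hterm : ∀ j ∈ univ, c j * ⟪α j, ω⟫ ≤ c j :=
    fun j _ => mul_le_of_le_one_right (hc j).le (hle j)
  have hall : ∑ j, c j * ⟪α j, ω⟫ = ∑ j, c j :=
    le_antisymm (sum_le_sum hterm) (hpair ▸ hsum)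
  refine ⟨by linarith, fun j => ?_⟩
  have hj := (sum_eq_sum_iff_of_le hterm).1 hall j (mem_univ j)
  exact (mul_eq_left₀ (hc j).ne').1 hj

theorem exists_ne_real_inner_lt_one_of_sum_smul_eq {ω : E} {α : ι → E} {c : ι → ℝ}
    (hc : ∀ j, 0 < c j) (heq : (∑ j, c j) • ω = ∑ j, c j • α j) (hαω : ∀ j, ⟪α j, ω⟫ = 1)
    {i : ι} (hi : 1 < ⟪α i, α i⟫) : ∃ j ≠ i, ⟪α i, α j⟫ < 1 := by
  have hpair : ∑ j, c j * ⟪α i, α j⟫ = ∑ j, c j := by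
    simpa only [inner_sum, real_inner_smul_right, real_inner_comm (α i) ω, hαω, mul_one] using
      (congrArg (⟪α i, ·⟫) heq).symm
  by_contra! hge
  have hlt : ∑ j, c j < ∑ j, c j * ⟪α i, α j⟫ := by
    refine sum_lt_sum (fun j _ => ?_) ⟨i, mem_univ i, lt_mul_of_one_lt_right (hc i) hi⟩
    rcases eq_or_ne j i with rfl | hji
    · exact le_mul_of_one_le_right (hc j).le hi.le
    · exact le_mul_of_one_le_right (hc j).le (hge j hji)
  linarith

end InnerProduct

namespace RootSystemNoG2

variable {E : Type*} [NormedAddCommGroup E] [InnerProductSpace ℝ E] {Φ : Finset E} {α β ω : E}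

theorem inner_self_le_two_s1 (hΦ : RootSystemNoG2 Φ) (hα : α ∈ Φ) : ⟪α, α⟫ ≤ 2 := by
  rcases hΦ.2.2.2.2 α hα with h | h <;> linarith

theorem inner_le_one_of_short (hΦ : RootSystemNoG2 Φ) (hα : α ∈ Φ) (hω : ω ∈ Φ)
    (hshort : ⟪ω, ω⟫ = 1) : ⟪α, ω⟫ ≤ 1 := by
  obtain ⟨m, hm⟩ := hΦ.2.2.1 ω hω α hα
  rw [hshort, div_one] at hm
  exact real_inner_le_one_of_two_mul_inner_eq_intCast hshort (hΦ.inner_self_le_two_s1 hα) hm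

theorem exists_intCast_eq_inner_of_long (hΦ : RootSystemNoG2 Φ) (hα : α ∈ Φ) (hβ : β ∈ Φ)
    (hlong : ⟪α, α⟫ = 2) : ∃ m : ℤ, ⟪α, β⟫ = m := by
  obtain ⟨m, hm⟩ := hΦ.2.2.1 α hα β hβ
  rw [hlong, mul_div_cancel_left₀ _ two_ne_zero, real_inner_comm] at hm
  exact ⟨m, hm⟩

theorem inner_eq_zero_and_add_eq_two_smul (hΦ : RootSystemNoG2 Φ) (hα : α ∈ Φ) (hβ : β ∈ Φ)
    (hαl : ⟪α, α⟫ = 2) (hβl : ⟪β, β⟫ = 2) (hshort : ⟪ω, ω⟫ = 1) (hαω : ⟪α, ω⟫ = 1)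
    (hβω : ⟪β, ω⟫ = 1) (hlt : ⟪α, β⟫ < 1) : ⟪α, β⟫ = 0 ∧ α + β = (2 : ℝ) • ω := by
  have hsq := real_inner_add_sub_two_smul_self hαl hβl hshort hαω hβω
  have horth : ⟪α, β⟫ = 0 := by
    have hnonneg : 0 ≤ ⟪α, β⟫ := by
      nlinarith [real_inner_self_nonneg (x := α + β - (2 : ℝ) • ω)]
    obtain ⟨m, hm⟩ := hΦ.exists_intCast_eq_inner_of_long hα hβ hαl
    rw [hm] at hnonneg hlt ⊢
    have h0 : (0 : ℤ) ≤ m := by exact_mod_cast hnonneg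
    have h1 : m < 1 := by exact_mod_cast hlt
    simp [show m = 0 by omega]
  rw [horth, mul_zero, inner_self_eq_zero, sub_eq_zero] at hsq
  exact ⟨horth, hsq⟩

end RootSystemNoG2

/-- If a short root `ω` is written as `d • ω = ∑ dⱼ • αⱼ` with positive integers
`d, dⱼ`, `∑ dⱼ ≤ d` and roots `αⱼ`, then either some `αⱼ = ω`, or two of the
`αⱼ` are orthogonal long roots summing to `2ω`. -/
theorem short_weight_combination {E : Type*} [NormedAddCommGroup E] [InnerProductSpace ℝ E]
    (Φ : Finset E) (hΦ : RootSystemNoG2 Φ)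
    (ω : E) (hω : ω ∈ Φ) (hshort : ⟪ω, ω⟫ = 1)
    (n : ℕ) (α : Fin n → E) (hα : ∀ j, α j ∈ Φ)
    (d : ℕ) (hd : 0 < d)
    (c : Fin n → ℕ) (hc : ∀ j, 0 < c j)
    (hsum : ∑ j, c j ≤ d)
    (heq : (d : ℝ) • ω = ∑ j, (c j : ℝ) • α j) :
    (∃ j, α j = ω) ∨
      ∃ j₀ j₁ : Fin n, j₀ ≠ j₁ ∧
        ⟪α j₀, α j₀⟫ = 2 ∧ ⟪α j₁, α j₁⟫ = 2 ∧
        ⟪α j₀, α j₁⟫ = 0 ∧ α j₀ + α j₁ = (2 : ℝ) • ω := by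
  have hcpos : ∀ j, (0 : ℝ) < c j := fun j => Nat.cast_pos.mpr (hc j)
  obtain ⟨hdsum, hαω⟩ := sum_eq_and_real_inner_eq_one_of_smul_eq_sum hshort
    (fun j => hΦ.inner_le_one_of_short (hα j) hω hshort) hcpos (by exact_mod_cast hsum) heq
  by_cases hshort_j : ∃ j, ⟪α j, α j⟫ = 1
  · obtain ⟨j, hj⟩ := hshort_j
    exact Or.inl ⟨j, eq_of_real_inner_eq_one hj hshort (hαω j)⟩
  push Not at hshort_j
  have hlong : ∀ j, ⟪α j, α j⟫ = 2 := fun j => (hΦ.2.2.2.2 _ (hα j)).resolve_left (hshort_j j)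
  obtain ⟨i, -⟩ : (univ : Finset (Fin n)).Nonempty :=
    nonempty_of_sum_ne_zero (hdsum ▸ Nat.cast_ne_zero.mpr hd.ne')
  rw [← hdsum] at heq
  obtain ⟨j, hji, hlt⟩ := exists_ne_real_inner_lt_one_of_sum_smul_eq hcpos heq hαω
    (i := i) (by rw [hlong i]; norm_num)
  obtain ⟨horth, hadd⟩ := hΦ.inner_eq_zero_and_add_eq_two_smul (hα i) (hα j) (hlong i) (hlong j)
    hshort (hαω i) (hαω j) hlt
  exact Or.inr ⟨i, j, hji.symm, hlong i, hlong j, horth, hadd⟩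
end
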